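/- arXiv:dg-ga/9711002 — 2 statements merged into one kernel-verified Lean document; each statement's English description precedes it below -/
import Mathlib

section
/- Let U ⊆ ℝ^m be an open convex set and u, v : U → ℝ^m smooth maps such that the Jacobian matrix of u is everywhere invertible, the map t ↦ (u(t), v(t)) pulls back Σᵢ duᵢ ∧ dvᵢ to zero, and u is a diffeomorphism onto its image. Then locally there exists a smooth function φ of the variables u₁,…,u_m with v_j = ∂φ/∂u_j for all j. -/
open Finset


open scoped ContDiff NNReal ENNReal Topology
open MeasureTheory Set Filter Metric

section Poincare
variable {E : Type*} [NormedAddCommGroup E] [NormedSpace ℝ E] [ProperSpace E]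

set_option maxHeartbeats 1600000 in
set_option synthInstance.maxHeartbeats 400000 in
theorem exists_potential {U : Set E} (hUopen : IsOpen U) (hUconv : Convex ℝ U)
    {a : E} (ha : a ∈ U) {α : E → E →L[ℝ] ℝ}
    (hαd : ∀ t ∈ U, HasFDerivAt α (fderiv ℝ α t) t)
    (hαc : ContinuousOn α U) (hα'c : ContinuousOn (fderiv ℝ α) U)
    (hsymm : ∀ t ∈ U, ∀ X Y : E, fderiv ℝ α t X Y = fderiv ℝ α t Y X) :
    ∃ F : E → ℝ, ∀ t ∈ U, HasFDerivAt F (α t) t := by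
  have hseg : ∀ x ∈ U, ∀ s ∈ Icc (0:ℝ) 1, a + s • (x - a) ∈ U := by
    intro x hx s hs
    have h := hUconv ha hx (by linarith [hs.2] : (0:ℝ) ≤ 1 - s) hs.1 (by ring)
    have heq : (1 - s) • a + s • x = a + s • (x - a) := by
      rw [smul_sub, sub_smul, one_smul]; abel
    rwa [heq] at h
  refine ⟨fun t => ∫ s in (0:ℝ)..1, α (a + s • (t - a)) (t - a), ?_⟩
  intro t ht
  obtain ⟨δ, hδpos, hδ⟩ := Metric.isOpen_iff.1 hUopen t ht
  set ε := δ / 2 with hε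
  have hεpos : 0 < ε := by positivity
  have hball : closedBall t ε ⊆ U :=
    (Metric.closedBall_subset_ball (by simp [hε]; linarith)).trans hδ
  -- the compact set containing all segments
  set K : Set E := (fun q : ℝ × E => a + q.1 • (q.2 - a)) '' (Icc (0:ℝ) 1 ×ˢ closedBall t ε)
    with hKdef
  have hK : IsCompact K :=
    ((isCompact_Icc).prod (isCompact_closedBall t ε)).image (by fun_prop)
  have hKU : K ⊆ U := by
    rintro _ ⟨⟨s, x⟩, ⟨hs, hx⟩, rfl⟩
    exact hseg x (hball hx) s hs
  have hKmem : ∀ s ∈ Icc (0:ℝ) 1, ∀ x ∈ closedBall t ε, a + s • (x - a) ∈ K :=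
    fun s hs x hx => ⟨(s, x), ⟨hs, hx⟩, rfl⟩
  obtain ⟨C₁, hC₁⟩ := hK.exists_bound_of_continuousOn (hαc.mono hKU)
  obtain ⟨C₂, hC₂⟩ := hK.exists_bound_of_continuousOn (f := fderiv ℝ α) (hα'c.mono hKU)
  -- the candidate derivative of the parametric integral
  set F' : E → ℝ → (E →L[ℝ] ℝ) := fun x s =>
    (α (a + s • (x - a))).comp (ContinuousLinearMap.id ℝ E)
      + (s • fderiv ℝ α (a + s • (x - a))).flip (x - a) with hF'def
  -- continuity of the integrand in `s`, for fixed `x`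
  have hcont_int : ∀ x ∈ closedBall t ε,
      ContinuousOn (fun s : ℝ => α (a + s • (x - a)) (x - a)) (Icc (0:ℝ) 1) := by
    intro x hx
    have h1 : ContinuousOn (fun s : ℝ => α (a + s • (x - a))) (Icc (0:ℝ) 1) :=
      hαc.comp (Continuous.continuousOn (by fun_prop))
        (fun s hs => hseg x (hball hx) s hs)
    exact (ContinuousLinearMap.apply ℝ ℝ (x - a)).continuous.comp_continuousOn h1
  have hε' : Set.uIoc (0:ℝ) 1 ⊆ Icc (0:ℝ) 1 := by
    rw [Set.uIoc_of_le zero_le_one]; exact Ioc_subset_Icc_self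
  have key := intervalIntegral.hasFDerivAt_integral_of_dominated_of_fderiv_le
    (μ := MeasureTheory.volume) (F := fun x s => α (a + s • (x - a)) (x - a)) (F' := F')
    (x₀ := t) (a := (0:ℝ)) (b := 1) (bound := fun _ => C₁ + C₂ * (ε + ‖t - a‖))
    (ball_mem_nhds t hεpos) ?_ ?_ ?_ ?_ ?_ ?_
  · -- compute the value of the derivative integral
    have hγU : ∀ s ∈ Set.uIcc (0:ℝ) 1, a + s • (t - a) ∈ U := by
      intro s hs
      rw [Set.uIcc_of_le zero_le_one] at hs
      exact hseg t ht s hs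
    have hg : ∀ s ∈ Set.uIcc (0:ℝ) 1, HasDerivAt (fun s : ℝ => s • α (a + s • (t - a)))
        (s • (fderiv ℝ α (a + s • (t - a)) (t - a)) + (1:ℝ) • α (a + s • (t - a))) s := by
      intro s hs
      have hγ' : HasDerivAt (fun s : ℝ => a + s • (t - a)) (t - a) s := by
        simpa using ((hasDerivAt_id s).smul_const (t - a)).const_add a
      have hαγ : HasDerivAt (fun s : ℝ => α (a + s • (t - a)))
          (fderiv ℝ α (a + s • (t - a)) (t - a)) s :=
        (hαd _ (hγU s hs)).comp_hasDerivAt s hγ'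
      exact ((hasDerivAt_id s).smul hαγ).congr_deriv (by simp)
    have hgcont : ContinuousOn (fun s : ℝ =>
        s • (fderiv ℝ α (a + s • (t - a)) (t - a)) + (1:ℝ) • α (a + s • (t - a)))
        (Set.uIcc (0:ℝ) 1) := by
      have h1 : ContinuousOn (fun s : ℝ => fderiv ℝ α (a + s • (t - a)))
          (Set.uIcc (0:ℝ) 1) :=
        hα'c.comp (Continuous.continuousOn (by fun_prop)) hγU
      have h2 : ContinuousOn (fun s : ℝ => α (a + s • (t - a))) (Set.uIcc (0:ℝ) 1) :=
        hαc.comp (Continuous.continuousOn (by fun_prop)) hγU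
      refine ContinuousOn.add ?_ (h2.const_smul (1:ℝ))
      have h0 : ContinuousOn (fun s : ℝ => s) (Set.uIcc (0:ℝ) 1) :=
        continuous_id.continuousOn
      have h5 : ContinuousOn (fun s : ℝ => fderiv ℝ α (a + s • (t - a)) (t - a))
          (Set.uIcc (0:ℝ) 1) := h1.clm_apply continuousOn_const
      exact h0.smul h5
    have hFTC := intervalIntegral.integral_eq_sub_of_hasDerivAt hg
      hgcont.intervalIntegrable
    have hint_eq : (∫ s in (0:ℝ)..1, F' t s) = α t := by
      rw [intervalIntegral.integral_congr (g := fun s =>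
          s • (fderiv ℝ α (a + s • (t - a)) (t - a)) + (1:ℝ) • α (a + s • (t - a))) ?_]
      · rw [hFTC]
        simp
      · intro s hs
        ext Y
        simp [hF'def, ContinuousLinearMap.flip_smul]
        rw [hsymm _ (hγU s hs) Y t, hsymm _ (hγU s hs) Y a]
        ring
    rwa [hint_eq] at key
  · -- measurability in s near t
    filter_upwards [Metric.ball_mem_nhds t hεpos] with x hx
    exact ((hcont_int x (ball_subset_closedBall hx)).mono hε').aestronglyMeasurable
      measurableSet_uIoc
  · -- interval integrability at t
    refine ContinuousOn.intervalIntegrable ?_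
    rw [Set.uIcc_of_le zero_le_one]
    exact hcont_int t (mem_closedBall_self hεpos.le)
  · -- measurability of F' t
    have h1 : ContinuousOn (fun s : ℝ => fderiv ℝ α (a + s • (t - a))) (Icc (0:ℝ) 1) :=
      hα'c.comp (Continuous.continuousOn (by fun_prop))
        (fun s hs => hseg t ht s hs)
    have h2 : ContinuousOn (fun s : ℝ => α (a + s • (t - a))) (Icc (0:ℝ) 1) :=
      hαc.comp (Continuous.continuousOn (by fun_prop))
        (fun s hs => hseg t ht s hs)
    have hFt : F' t = fun s : ℝ => α (a + s • (t - a))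
        + (s • fderiv ℝ α (a + s • (t - a))).flip (t - a) := by
      funext s
      simp only [hF'def]
      rw [ContinuousLinearMap.comp_id]
    have h3 : ContinuousOn (F' t) (Icc (0:ℝ) 1) := by
      rw [hFt]
      refine ContinuousOn.add h2 ?_
      have h0 : ContinuousOn (fun s : ℝ => s) (Icc (0:ℝ) 1) := continuous_id.continuousOn
      have h4 : ContinuousOn (fun s : ℝ => (s • fderiv ℝ α (a + s • (t - a))).flip)
          (Icc (0:ℝ) 1) :=
        (ContinuousLinearMap.flipₗᵢ ℝ E E ℝ).continuous.comp_continuousOn (h0.smul h1)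
      exact (ContinuousLinearMap.apply ℝ (E →L[ℝ] ℝ) (t - a)).continuous.comp_continuousOn h4
    exact (h3.mono hε').aestronglyMeasurable measurableSet_uIoc
  · -- the bound
    refine Filter.Eventually.of_forall fun s => fun hs x hx => ?_
    have hsIcc : s ∈ Icc (0:ℝ) 1 := hε' hs
    have hγK : a + s • (x - a) ∈ K := hKmem s hsIcc x (ball_subset_closedBall hx)
    refine (norm_add_le _ _).trans ?_
    refine add_le_add ?_ ?_
    · rw [ContinuousLinearMap.comp_id]
      exact hC₁ _ hγK
    · refine (ContinuousLinearMap.le_opNorm _ _).trans ?_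
      rw [ContinuousLinearMap.opNorm_flip]
      refine (mul_le_mul_of_nonneg_right
        (ContinuousLinearMap.opNorm_smul_le s (fderiv ℝ α (a + s • (x - a)))) (norm_nonneg _)).trans ?_
      have hxa : ‖x - a‖ ≤ ε + ‖t - a‖ := by
        calc ‖x - a‖ ≤ ‖x - t‖ + ‖t - a‖ := norm_sub_le_norm_sub_add_norm_sub x t a
          _ ≤ ε + ‖t - a‖ := by
              have := mem_ball_iff_norm.1 hx
              linarith
      have hsn : ‖s‖ ≤ 1 := by
        rw [Real.norm_eq_abs, abs_of_nonneg hsIcc.1]; exact hsIcc.2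
      have h5 := hC₂ _ hγK
      have h6 : (0:ℝ) ≤ ‖fderiv ℝ α (a + s • (x - a))‖ := norm_nonneg (fderiv ℝ α (a + s • (x - a)))
      have h7 : (0:ℝ) ≤ ‖x - a‖ := norm_nonneg _
      have h8 : ‖s‖ * ‖fderiv ℝ α (a + s • (x - a))‖ * ‖x - a‖
          ≤ ‖fderiv ℝ α (a + s • (x - a))‖ * ‖x - a‖ := by
        nlinarith [mul_nonneg (mul_nonneg (sub_nonneg.2 hsn) h6) h7]
      have h9 : ‖fderiv ℝ α (a + s • (x - a))‖ * ‖x - a‖ ≤ C₂ * (ε + ‖t - a‖) :=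
        mul_le_mul h5 hxa h7 (h6.trans h5)
      linarith
  · exact intervalIntegrable_const
  · -- differentiability in x
    refine Filter.Eventually.of_forall fun s => fun hs x hx => ?_
    have hsIcc : s ∈ Icc (0:ℝ) 1 := hε' hs
    have hγU : a + s • (x - a) ∈ U := hseg x (hball (ball_subset_closedBall hx)) s hsIcc
    have hinner : HasFDerivAt (fun x : E => a + s • (x - a))
        (s • ContinuousLinearMap.id ℝ E) x := by
      simpa using (((hasFDerivAt_id x).sub_const a).const_smul s).const_add a
    have hc : HasFDerivAt (fun x : E => α (a + s • (x - a)))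
        (s • fderiv ℝ α (a + s • (x - a))) x := by
      have := (hαd _ hγU).comp x hinner
      refine this.congr_fderiv ?_
      ext Y
      simp
    have hu : HasFDerivAt (fun x : E => x - a) (ContinuousLinearMap.id ℝ E) x :=
      (hasFDerivAt_id x).sub_const a
    exact hc.clm_apply hu

end Poincare


section Main

noncomputable def dotL (m : ℕ) : (Fin m → ℝ) →L[ℝ] (Fin m → ℝ) →L[ℝ] ℝ :=
  ∑ i, (ContinuousLinearMap.proj i).smulRight (ContinuousLinearMap.proj i)

lemma dotL_apply (m : ℕ) (w x : Fin m → ℝ) : dotL m w x = ∑ i, w i * x i := by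
  simp [dotL, ContinuousLinearMap.sum_apply, smul_eq_mul]

end Main

noncomputable def alphaForm (m : ℕ) (u v : (Fin m → ℝ) → Fin m → ℝ) :
    (Fin m → ℝ) → (Fin m → ℝ) →L[ℝ] ℝ :=
  fun t => (dotL m (v t)).comp (fderiv ℝ u t)


set_option maxHeartbeats 1600000 in
set_option synthInstance.maxHeartbeats 400000 in
/-- Let `U ⊆ ℝ^m` be open and convex and `u, v : U → ℝ^m` smooth maps
such that the Jacobian of `u` is everywhere invertible, the map `t ↦ (u(t), v(t))`
pulls back `Σᵢ duᵢ ∧ dvᵢ` to zero, and `u` is a diffeomorphism onto its image.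
Then locally there is a smooth function `φ` of the variables `u₁, …, u_m` with
`v_j = ∂φ/∂u_j` for all `j`. -/
theorem statement4 (m : ℕ) (U : Set (Fin m → ℝ)) (hUopen : IsOpen U) (hUconv : Convex ℝ U)
    (u v : (Fin m → ℝ) → Fin m → ℝ)
    (hu : ContDiffOn ℝ (⊤ : ℕ∞) u U) (hv : ContDiffOn ℝ (⊤ : ℕ∞) v U)
    (hjac : ∀ t ∈ U, Function.Bijective (fderiv ℝ u t))
    (hLag : ∀ t ∈ U, ∀ X Y : Fin m → ℝ,
        ∑ i, ((fderiv ℝ u t X) i * (fderiv ℝ v t Y) i -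
              (fderiv ℝ u t Y) i * (fderiv ℝ v t X) i) = 0)
    (hdiffeo : Set.InjOn u U) :
    ∀ t₀ ∈ U, ∃ (W : Set (Fin m → ℝ)) (φ : (Fin m → ℝ) → ℝ),
      IsOpen W ∧ u t₀ ∈ W ∧ ContDiffOn ℝ (⊤ : ℕ∞) φ W ∧
      ∀ t ∈ U, u t ∈ W → ∀ j, v t j = fderiv ℝ φ (u t) (Pi.single j 1) := by
  intro t₀ ht₀
  classical
  have hn1 : ((⊤ : ℕ∞) : WithTop ℕ∞) ≠ 0 := by simp
  have htop1 : ((⊤ : ℕ∞) : WithTop ℕ∞) + 1 ≤ ((⊤ : ℕ∞) : WithTop ℕ∞) := by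
    exact_mod_cast (le_top : (⊤ : ℕ∞) + 1 ≤ ⊤)
  have hud : ∀ t ∈ U, DifferentiableAt ℝ u t := fun t ht =>
    (hu.differentiableOn hn1).differentiableAt (hUopen.mem_nhds ht)
  have hvd : ∀ t ∈ U, DifferentiableAt ℝ v t := fun t ht =>
    (hv.differentiableOn hn1).differentiableAt (hUopen.mem_nhds ht)
  have h2 : ContDiffOn ℝ (⊤ : ℕ∞) (fderiv ℝ u) U := hu.fderiv_of_isOpen hUopen htop1
  have hα_cd : ContDiffOn ℝ (⊤ : ℕ∞) (alphaForm m u v) U := by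
    have h1 : ContDiffOn ℝ (⊤ : ℕ∞) (fun t => dotL m (v t)) U :=
      (dotL m).contDiff.comp_contDiffOn hv
    exact h1.clm_comp h2
  have hαd : ∀ t ∈ U, HasFDerivAt (alphaForm m u v) (fderiv ℝ (alphaForm m u v) t) t :=
    fun t ht =>
      ((hα_cd.differentiableOn hn1).differentiableAt (hUopen.mem_nhds ht)).hasFDerivAt
  have hα'c : ContinuousOn (fderiv ℝ (alphaForm m u v)) U :=
    (hα_cd.fderiv_of_isOpen hUopen htop1).continuousOn
  -- symmetry of the derivative of the 1-form
  have hsymm : ∀ t ∈ U, ∀ X Y : Fin m → ℝ,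
      fderiv ℝ (alphaForm m u v) t X Y = fderiv ℝ (alphaForm m u v) t Y X := by
    intro t ht X Y
    have hvt : HasFDerivAt v (fderiv ℝ v t) t := (hvd t ht).hasFDerivAt
    have hc : HasFDerivAt (fun t => dotL m (v t)) ((dotL m).comp (fderiv ℝ v t)) t :=
      (dotL m).hasFDerivAt.comp t hvt
    have hd : HasFDerivAt (fderiv ℝ u) (fderiv ℝ (fderiv ℝ u) t) t :=
      ((h2.differentiableOn hn1).differentiableAt (hUopen.mem_nhds ht)).hasFDerivAt
    have htot : HasFDerivAt (alphaForm m u v)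
        ((ContinuousLinearMap.compL ℝ (Fin m → ℝ) (Fin m → ℝ) ℝ
            (dotL m (v t))).comp (fderiv ℝ (fderiv ℝ u) t)
          + ((ContinuousLinearMap.compL ℝ (Fin m → ℝ) (Fin m → ℝ) ℝ).flip
              (fderiv ℝ u t)).comp ((dotL m).comp (fderiv ℝ v t))) t := hc.clm_comp hd
    rw [htot.fderiv]
    have hA : fderiv ℝ (fderiv ℝ u) t X Y = fderiv ℝ (fderiv ℝ u) t Y X := by
      refine second_derivative_symmetric_of_eventually (f := u) ?_ hd X Y
      filter_upwards [hUopen.mem_nhds ht] with y hy using (hud y hy).hasFDerivAt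
    simp only [ContinuousLinearMap.add_apply, ContinuousLinearMap.coe_comp',
      Function.comp_apply, ContinuousLinearMap.compL_apply, ContinuousLinearMap.flip_apply,
      ContinuousLinearMap.coe_comp, dotL_apply]
    rw [hA]
    congr 1
    have h0 := hLag t ht X Y
    rw [Finset.sum_sub_distrib, sub_eq_zero] at h0
    calc ∑ i, fderiv ℝ v t X i * fderiv ℝ u t Y i
        = ∑ i, fderiv ℝ u t Y i * fderiv ℝ v t X i := by
          exact Finset.sum_congr rfl fun i _ => mul_comm _ _
      _ = ∑ i, fderiv ℝ u t X i * fderiv ℝ v t Y i := h0.symm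
      _ = ∑ i, fderiv ℝ v t Y i * fderiv ℝ u t X i := by
          exact Finset.sum_congr rfl fun i _ => mul_comm _ _
  -- the potential on U
  obtain ⟨F, hF⟩ := exists_potential hUopen hUconv ht₀ hαd hα_cd.continuousOn hα'c hsymm
  -- analyticity of the potential
  have hFcdOn : ContDiffOn ℝ (⊤ : ℕ∞) F U := by
    rw [contDiffOn_infty_iff_fderiv_of_isOpen hUopen]
    refine ⟨fun t ht => (hF t ht).differentiableAt.differentiableWithinAt, ?_⟩
    exact hα_cd.congr (fun t ht => (hF t ht).fderiv)
  have hFcd : ∀ t ∈ U, ContDiffAt ℝ (⊤ : ℕ∞) F t := fun t ht =>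
    hFcdOn.contDiffAt (hUopen.mem_nhds ht)
  -- continuous linear equivalences from the invertible Jacobians
  have hequiv : ∀ t, t ∈ U → ∃ eq : (Fin m → ℝ) ≃L[ℝ] (Fin m → ℝ),
      (eq : (Fin m → ℝ) →L[ℝ] (Fin m → ℝ)) = fderiv ℝ u t := by
    intro t ht
    refine ⟨(LinearEquiv.ofBijective
      ((fderiv ℝ u t : (Fin m → ℝ) →ₗ[ℝ] (Fin m → ℝ))) (hjac t ht)).toContinuousLinearEquiv,
      ?_⟩
    ext y
    rfl
  choose e he using hequiv
  -- inverse function theorem at t₀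
  have hu₀ : ContDiffAt ℝ (⊤ : ℕ∞) u t₀ := hu.contDiffAt (hUopen.mem_nhds ht₀)
  have he₀ : HasFDerivAt u ((e t₀ ht₀ : (Fin m → ℝ) →L[ℝ] (Fin m → ℝ))) t₀ := by
    rw [he t₀ ht₀]; exact (hud t₀ ht₀).hasFDerivAt
  set Φ := hu₀.toOpenPartialHomeomorph u he₀ hn1 with hΦdef
  have hΦcoe : ⇑Φ = u := rfl
  have ht₀src : t₀ ∈ Φ.source := hu₀.mem_toOpenPartialHomeomorph_source he₀ hn1
  have htgt : u t₀ ∈ Φ.target := hu₀.image_mem_toOpenPartialHomeomorph_target he₀ hn1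
  -- the key local statement about Φ.symm
  have key : ∀ t₁, ∀ ht₁ : t₁ ∈ U, u t₁ ∈ Φ.target → Φ.symm (u t₁) = t₁ →
      ContDiffAt ℝ (⊤ : ℕ∞) Φ.symm (u t₁) ∧
      HasFDerivAt Φ.symm (((e t₁ ht₁).symm : (Fin m → ℝ) →L[ℝ] (Fin m → ℝ))) (u t₁) := by
    intro t₁ ht₁ htgt₁ hsymm₁
    have hu₁ : ContDiffAt ℝ (⊤ : ℕ∞) u t₁ := hu.contDiffAt (hUopen.mem_nhds ht₁)
    have he₁ : HasFDerivAt u ((e t₁ ht₁ : (Fin m → ℝ) →L[ℝ] (Fin m → ℝ))) t₁ := by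
      rw [he t₁ ht₁]; exact (hud t₁ ht₁).hasFDerivAt
    have hstrict : HasStrictFDerivAt u ((e t₁ ht₁ : (Fin m → ℝ) →L[ℝ] (Fin m → ℝ))) t₁ :=
      hu₁.hasStrictFDerivAt' he₁ hn1
    have hg_cd : ContDiffAt ℝ (⊤ : ℕ∞) (hu₁.localInverse he₁ hn1) (u t₁) := hu₁.to_localInverse he₁ hn1
    have hg_fd : HasFDerivAt (hu₁.localInverse he₁ hn1)
        (((e t₁ ht₁).symm : (Fin m → ℝ) →L[ℝ] (Fin m → ℝ))) (u t₁) :=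
      hstrict.to_localInverse.hasFDerivAt
    have hgc : ContinuousAt (hu₁.localInverse he₁ hn1) (u t₁) :=
      hstrict.localInverse_continuousAt
    have hgfix : (hu₁.localInverse he₁ hn1) (u t₁) = t₁ := hu₁.localInverse_apply_image he₁ hn1
    have hΦc : ContinuousAt Φ.symm (u t₁) := Φ.continuousAt_symm htgt₁
    have hev : Φ.symm =ᶠ[𝓝 (u t₁)] (hu₁.localInverse he₁ hn1) := by
      have h1 : ∀ᶠ z in 𝓝 (u t₁), u ((hu₁.localInverse he₁ hn1) z) = z :=
        hstrict.eventually_right_inverse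
      have h2 : ∀ᶠ z in 𝓝 (u t₁), (hu₁.localInverse he₁ hn1) z ∈ U :=
        hgc.eventually_mem (hUopen.mem_nhds (by rw [hgfix]; exact ht₁))
      have h3 : ∀ᶠ z in 𝓝 (u t₁), Φ.symm z ∈ U :=
        hΦc.eventually_mem (hUopen.mem_nhds (by rw [hsymm₁]; exact ht₁))
      have h4 : ∀ᶠ z in 𝓝 (u t₁), z ∈ Φ.target := Φ.open_target.mem_nhds htgt₁
      filter_upwards [h1, h2, h3, h4] with z hz1 hz2 hz3 hz4
      refine hdiffeo hz3 hz2 ?_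
      rw [hz1]
      calc u (Φ.symm z) = Φ (Φ.symm z) := by rw [hΦcoe]
        _ = z := Φ.right_inv hz4
    exact ⟨hg_cd.congr_of_eventuallyEq hev, hg_fd.congr_of_eventuallyEq hev⟩
  -- the open set W and the potential φ
  refine ⟨Φ.target ∩ Φ.symm ⁻¹' (Φ.source ∩ U), F ∘ Φ.symm,
    Φ.isOpen_inter_preimage_symm (Φ.open_source.inter hUopen), ⟨htgt, ?_⟩, ?_, ?_⟩
  · have : Φ.symm (u t₀) = t₀ := by
      calc Φ.symm (u t₀) = Φ.symm (Φ t₀) := by rw [hΦcoe]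
        _ = t₀ := Φ.left_inv ht₀src
    rw [Set.mem_preimage, this]
    exact ⟨ht₀src, ht₀⟩
  · -- smoothness of φ on W
    intro x hx
    have hx1 : x ∈ Φ.target := hx.1
    have hx2 : Φ.symm x ∈ Φ.source ∩ U := hx.2
    have hux : u (Φ.symm x) = x := by
      calc u (Φ.symm x) = Φ (Φ.symm x) := by rw [hΦcoe]
        _ = x := Φ.right_inv hx1
    have hk := key (Φ.symm x) hx2.2 (by rwa [hux]) (by rw [hux])
    have hk1 : ContDiffAt ℝ (⊤ : ℕ∞) Φ.symm x := hux ▸ hk.1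
    exact ((hFcd _ hx2.2).comp x hk1).contDiffWithinAt
  · -- the gradient property
    intro t ht htW j
    have ht1 : u t ∈ Φ.target := htW.1
    have ht2 : Φ.symm (u t) ∈ Φ.source ∩ U := htW.2
    have huΦ : u (Φ.symm (u t)) = u t := by
      calc u (Φ.symm (u t)) = Φ (Φ.symm (u t)) := by rw [hΦcoe]
        _ = u t := Φ.right_inv ht1
    have hfix : Φ.symm (u t) = t := hdiffeo ht2.2 ht huΦ
    have hk := key t ht ht1 hfix
    have hD : HasFDerivAt (F ∘ Φ.symm)
        ((alphaForm m u v t).comp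
          (((e t ht).symm : (Fin m → ℝ) →L[ℝ] (Fin m → ℝ)))) (u t) := by
      have h1 : HasFDerivAt F (alphaForm m u v t) (Φ.symm (u t)) := by
        rw [hfix]; exact hF t ht
      exact h1.comp (u t) hk.2
    rw [hD.fderiv]
    have hinv : fderiv ℝ u t ((e t ht).symm (Pi.single j 1)) = Pi.single j 1 := by
      rw [← he t ht]
      simp
    calc v t j = ∑ i, v t i * (Pi.single j 1 : Fin m → ℝ) i := by
          simp [Pi.single_apply, mul_ite]
      _ = dotL m (v t) (Pi.single j 1) := (dotL_apply m _ _).symm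
      _ = dotL m (v t) (fderiv ℝ u t ((e t ht).symm (Pi.single j 1))) := by rw [hinv]
      _ = ((alphaForm m u v t).comp
            (((e t ht).symm : (Fin m → ℝ) →L[ℝ] (Fin m → ℝ)))) (Pi.single j 1) := by
          simp [alphaForm]
end

section
/- Let λ : U → GL(m,ℝ) be a smooth invertible-matrix-valued map on an open set U ⊆ ℝ^m such that each 1-form ξᵢ = Σⱼ λᵢⱼ dtⱼ is closed. Define an almost complex structure I on U × ℝ^m (coordinates t, x) by I(∂/∂tⱼ) = Σᵢ λᵢⱼ ∂/∂xᵢ and I(Σᵢ λᵢⱼ ∂/∂xᵢ) = −∂/∂tⱼ. Then I is integrable: if uᵢ are local primitives with duᵢ = ξᵢ, the functions wⱼ = uⱼ + i xⱼ are holomorphic coordinates for I. -/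
namespace Statement19

/-- `U × ℝ^m` with coordinates `(t, x)`. -/
abbrev E (m : ℕ) := (Fin m → ℝ) × (Fin m → ℝ)

/-- Let `λ : U → GL(m, ℝ)` be a smooth invertible-matrix-valued map
on an open set `U ⊆ ℝ^m` such that each 1-form `ξᵢ = Σⱼ λᵢⱼ dtⱼ` is closed. Define an
almost complex structure `I` on `U × ℝ^m` (coordinates `t, x`) by
`I(∂/∂tⱼ) = Σᵢ λᵢⱼ ∂/∂xᵢ` and `I(Σᵢ λᵢⱼ ∂/∂xᵢ) = −∂/∂tⱼ`, i.e.
`I(a, b) = (−λ⁻¹ b, λ a)`. Then `I` is integrable: if `uᵢ` are local primitives with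
`duᵢ = ξᵢ`, the functions `wⱼ = uⱼ + i xⱼ` are holomorphic coordinates for `I`:
`dwⱼ ∘ I = i · dwⱼ`, and `(u, x)` is a genuine coordinate system (its differential is
a linear isomorphism at each point). -/
theorem statement19 (m : ℕ) (U : Set (Fin m → ℝ)) (hU : IsOpen U)
    (lam : (Fin m → ℝ) → Matrix (Fin m) (Fin m) ℝ)
    (hsmooth : ∀ j l : Fin m, ContDiffOn ℝ (⊤ : ℕ∞) (fun s => lam s j l) U)
    (hinv : ∀ t ∈ U, IsUnit (lam t).det)
    -- each ξᵢ = Σⱼ λᵢⱼ dtⱼ is closed :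
    (hclosed : ∀ t ∈ U, ∀ j k l : Fin m,
        fderiv ℝ (fun s => lam s j l) t (Pi.single k 1) =
        fderiv ℝ (fun s => lam s j k) t (Pi.single l 1))
    -- the almost complex structure I :
    (Imap : E m → E m → E m)
    (hI : ∀ (p : E m) (X : E m),
        Imap p X = (-(lam p.1)⁻¹.mulVec X.2, (lam p.1).mulVec X.1))
    -- local primitives uᵢ with duᵢ = ξᵢ :
    (u : (Fin m → ℝ) → Fin m → ℝ)
    (hu : ∀ t ∈ U, ∀ X : Fin m → ℝ, fderiv ℝ u t X = (lam t).mulVec X)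
    -- the complex functions wⱼ = uⱼ + i xⱼ :
    (w : Fin m → E m → ℂ)
    (hw : ∀ j (p : E m), w j p = (u p.1 j : ℂ) + Complex.I * (p.2 j : ℂ)) :
    ∀ p : E m, p.1 ∈ U →
      (∀ j (X : E m),
          fderiv ℝ (w j) p (Imap p X) = Complex.I * fderiv ℝ (w j) p X) ∧
      Function.Bijective (fderiv ℝ (fun q : E m => (u q.1, q.2)) p) := by
  intro p hp
  set t := p.1 with ht
  set L := lam t with hL
  have hdet : IsUnit L.det := hinv t hp
  have hLinj : Function.Injective L.mulVec :=
    Matrix.mulVec_injective_iff_isUnit.2 ((Matrix.isUnit_iff_isUnit_det L).2 hdet)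
  have hLLinv : ∀ b : Fin m → ℝ, L.mulVec (L⁻¹.mulVec b) = b := by
    intro b
    rw [Matrix.mulVec_mulVec, Matrix.mul_nonsing_inv _ hdet, Matrix.one_mulVec]
  -- differentiability of u at t
  have hdiff : DifferentiableAt ℝ u t := by
    rcases Nat.eq_zero_or_pos m with hm | hm
    · subst hm
      have : u = fun _ => u t := by
        funext s; exact congrArg u (Subsingleton.elim _ _)
      rw [this]; exact differentiableAt_const _
    · by_contra h
      have h0 := fderiv_zero_of_not_differentiableAt h
      have := hu t hp (Pi.single ⟨0, hm⟩ 1)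
      rw [h0] at this
      have h1 : L.mulVec (Pi.single ⟨0, hm⟩ 1) = L.mulVec 0 := by
        rw [Matrix.mulVec_zero]; exact this.symm
      have := hLinj h1
      have := congrFun this ⟨0, hm⟩
      simp at this
  -- fderiv of w j
  have hwd : ∀ j (X : E m),
      fderiv ℝ (w j) p X = (L.mulVec X.1 j : ℂ) + Complex.I * (X.2 j : ℂ) := by
    intro j X
    have h1 : HasFDerivAt (fun q : E m => u q.1)
        ((fderiv ℝ u t).comp (ContinuousLinearMap.fst ℝ (Fin m → ℝ) (Fin m → ℝ))) p :=
      hdiff.hasFDerivAt.comp p (hasFDerivAt_fst)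
    have h1j : HasFDerivAt (fun q : E m => u q.1 j)
        ((ContinuousLinearMap.proj j).comp
          ((fderiv ℝ u t).comp (ContinuousLinearMap.fst ℝ (Fin m → ℝ) (Fin m → ℝ)))) p :=
      (ContinuousLinearMap.proj (R := ℝ) (φ := fun _ : Fin m => ℝ) j).hasFDerivAt.comp p h1
    have h1c : HasFDerivAt (fun q : E m => ((u q.1 j : ℝ) : ℂ))
        (Complex.ofRealCLM.comp ((ContinuousLinearMap.proj j).comp
          ((fderiv ℝ u t).comp (ContinuousLinearMap.fst ℝ (Fin m → ℝ) (Fin m → ℝ))))) p :=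
      Complex.ofRealCLM.hasFDerivAt.comp p h1j
    have h2j : HasFDerivAt (fun q : E m => q.2 j)
        ((ContinuousLinearMap.proj j).comp
          (ContinuousLinearMap.snd ℝ (Fin m → ℝ) (Fin m → ℝ))) p :=
      (ContinuousLinearMap.proj (R := ℝ) (φ := fun _ : Fin m => ℝ) j).hasFDerivAt.comp p
        (hasFDerivAt_snd)
    have h2c : HasFDerivAt (fun q : E m => ((q.2 j : ℝ) : ℂ))
        (Complex.ofRealCLM.comp ((ContinuousLinearMap.proj j).comp
          (ContinuousLinearMap.snd ℝ (Fin m → ℝ) (Fin m → ℝ)))) p :=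
      Complex.ofRealCLM.hasFDerivAt.comp p h2j
    have h2m := h2c.const_mul Complex.I
    have hsum : HasFDerivAt (fun q : E m => ((u q.1 j : ℝ) : ℂ) + Complex.I * ((q.2 j : ℝ) : ℂ)) _ p :=
      h1c.add h2m
    have hwfun : w j = fun q : E m => ((u q.1 j : ℝ) : ℂ) + Complex.I * ((q.2 j : ℝ) : ℂ) := by
      funext q; exact hw j q
    rw [hwfun, hsum.fderiv]
    simp [hu t hp]; rfl
  refine ⟨?_, ?_⟩
  · intro j X
    rw [hwd, hwd, hI]
    simp only
    rw [Matrix.mulVec_neg, hLLinv]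
    simp only [Pi.neg_apply, Complex.ofReal_neg, mul_add]
    rw [← mul_assoc, Complex.I_mul_I]
    ring
  · -- bijectivity
    have hF : HasFDerivAt (fun q : E m => (u q.1, q.2))
        (((fderiv ℝ u t).comp (ContinuousLinearMap.fst ℝ (Fin m → ℝ) (Fin m → ℝ))).prod
          (ContinuousLinearMap.snd ℝ (Fin m → ℝ) (Fin m → ℝ))) p :=
      HasFDerivAt.prodMk (HasFDerivAt.comp p hdiff.hasFDerivAt hasFDerivAt_fst) hasFDerivAt_snd
    rw [hF.fderiv]
    constructor
    · intro a b hab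
      simp only [ContinuousLinearMap.prod_apply, ContinuousLinearMap.comp_apply,
        ContinuousLinearMap.coe_fst', ContinuousLinearMap.coe_snd', Prod.mk.injEq] at hab
      have h1 : L.mulVec a.1 = L.mulVec b.1 := by
        rw [← hu t hp, ← hu t hp]; exact hab.1
      exact Prod.ext (hLinj h1) hab.2
    · intro c
      refine ⟨(L⁻¹.mulVec c.1, c.2), ?_⟩
      simp only [ContinuousLinearMap.prod_apply, ContinuousLinearMap.comp_apply,
        ContinuousLinearMap.coe_fst', ContinuousLinearMap.coe_snd']
      rw [hu t hp, hLLinv]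


end Statement19
end
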